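/- Let D ⊆ E be an open convex set on which J(x) is injective and the affine covariant Lipschitz condition ‖J(y)† ∘ (J(x + t(y − x)) − J(x))‖ ≤ ω t ‖y − x‖ holds for all x, y ∈ D and t ∈ [0, 1]. Suppose x, x̂ ∈ D satisfy F(x) = 0 and ‖x̂ − x‖ ≤ η·(Δt)^p for some constants η ≥ 0, Δt ≥ 0 and an integer p ≥ 1. Then the first Newton correction at x̂ satisfies ‖J(x̂)† F(x̂)‖ ≤ η·(Δt)^p · (1 + (ω/2)·η·(Δt)^p). -/

import Mathlib

/-! Put `d = x̂ - x` and `P = J(x̂)†`, a left inverse of `J(x̂)`. Along the segment,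
`g t = P F(x + t d) - t d` vanishes at `t = 0` and has derivative `-P (J(x̂) - J(x + t d)) d`;
the Lipschitz condition taken at the base point `x + t d` with `t = 1` bounds its norm by
`ω (1 - t) ‖d‖²`, so `‖P F(x̂) - d‖ = ‖g 1 - g 0‖ ≤ ω ‖d‖² / 2`. -/

noncomputable def pinv {n m : ℕ}
    (A : EuclideanSpace ℂ (Fin n) →L[ℂ] EuclideanSpace ℂ (Fin m)) :
    EuclideanSpace ℂ (Fin m) →L[ℂ] EuclideanSpace ℂ (Fin n) :=
  (ContinuousLinearMap.inverse ((ContinuousLinearMap.adjoint A) ∘L A)) ∘L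
    ContinuousLinearMap.adjoint A

noncomputable def newtonIter {n m : ℕ}
    (F : EuclideanSpace ℂ (Fin n) → EuclideanSpace ℂ (Fin m))
    (x0 : EuclideanSpace ℂ (Fin n)) : ℕ → EuclideanSpace ℂ (Fin n)
  | 0 => x0
  | (k+1) => newtonIter F x0 k - pinv (fderiv ℂ F (newtonIter F x0 k)) (F (newtonIter F x0 k))

noncomputable def newtonStep {n m : ℕ}
    (F : EuclideanSpace ℂ (Fin n) → EuclideanSpace ℂ (Fin m))
    (x0 : EuclideanSpace ℂ (Fin n)) (k : ℕ) : EuclideanSpace ℂ (Fin n) :=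
  newtonIter F x0 (k+1) - newtonIter F x0 k

open Set ContinuousLinearMap

theorem norm_image_sub_le_of_norm_deriv_le_one_sub {E : Type*} [NormedAddCommGroup E]
    [NormedSpace ℝ E] {g g' : ℝ → E} {C : ℝ}
    (hg : ∀ t ∈ Icc (0 : ℝ) 1, HasDerivAt g (g' t) t)
    (bound : ∀ t ∈ Icc (0 : ℝ) 1, ‖g' t‖ ≤ C * (1 - t)) :
    ‖g 1 - g 0‖ ≤ C / 2 := by
  have hB : ∀ t, HasDerivAt (fun t : ℝ => C * (t - t ^ 2 / 2)) (C * (1 - t)) t := fun t => by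
    simpa using (((hasDerivAt_id t).sub ((hasDerivAt_pow 2 t).div_const 2)).const_mul C)
  have := image_norm_le_of_norm_deriv_right_le_deriv_boundary (f := fun t => g t - g 0)
    (fun t ht => ((hg t ht).continuousAt.sub continuousAt_const).continuousWithinAt)
    (fun t ht => ((hg t (Ico_subset_Icc_self ht)).sub_const (g 0)).hasDerivWithinAt)
    (by simp) hB (fun t ht => bound t (Ico_subset_Icc_self ht)) (right_mem_Icc.2 zero_le_one)
  linarith

theorem norm_newton_correction_le {E G : Type*} [NormedAddCommGroup E] [NormedSpace ℝ E]
    [NormedAddCommGroup G] [NormedSpace ℝ G] {f : E → G} {f' : E → E →L[ℝ] G}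
    {P : G →L[ℝ] E} {x y : E} {ω : ℝ}
    (hf : ∀ z ∈ segment ℝ x y, HasFDerivAt f (f' z) z) (hfx : f x = 0)
    (hP : P ∘L f' y = .id ℝ E)
    (hLip : ∀ z ∈ segment ℝ x y, ‖P ∘L (f' y - f' z)‖ ≤ ω * ‖y - z‖) :
    ‖P (f y)‖ ≤ ‖y - x‖ + ω / 2 * ‖y - x‖ ^ 2 := by
  set d := y - x
  have hseg : ∀ t ∈ Icc (0 : ℝ) 1, x + t • d ∈ segment ℝ x y := fun t ht =>
    segment_eq_image' ℝ x y ▸ mem_image_of_mem _ ht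
  have hdist : ∀ t : ℝ, y - (x + t • d) = (1 - t) • d := fun t => by
    simp only [d, sub_smul, one_smul]; abel
  have hPd : P (f' y d) = d := congr($hP d)
  have hderiv : ∀ t ∈ Icc (0 : ℝ) 1, HasDerivAt (fun t : ℝ => P (f (x + t • d)) - t • d)
      (-(P ∘L (f' y - f' (x + t • d))) d) t := fun t ht => by
    have hline : HasDerivAt (fun t : ℝ => x + t • d) d t := by
      simpa using ((hasDerivAt_id t).smul_const d).const_add x
    convert (P.hasFDerivAt.comp_hasDerivAt t ((hf _ (hseg t ht)).comp_hasDerivAt t hline)).sub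
      ((hasDerivAt_id t).smul_const d) using 1
    · rfl
    · simp [hPd]
  have hbound : ∀ t ∈ Icc (0 : ℝ) 1,
      ‖-(P ∘L (f' y - f' (x + t • d))) d‖ ≤ ω * ‖d‖ * ‖d‖ * (1 - t) := fun t ht => by
    rw [norm_neg]
    calc ‖(P ∘L (f' y - f' (x + t • d))) d‖ ≤ ω * ‖y - (x + t • d)‖ * ‖d‖ :=
          le_of_opNorm_le _ (hLip _ (hseg t ht)) d
      _ = ω * ‖d‖ * ‖d‖ * (1 - t) := by
          rw [hdist, norm_smul, Real.norm_of_nonneg (sub_nonneg.2 ht.2)]; ring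
  have hg := norm_image_sub_le_of_norm_deriv_le_one_sub hderiv hbound
  simp only [one_smul, zero_smul, add_zero, sub_zero, hfx, map_zero, d, add_sub_cancel] at hg
  calc ‖P (f y)‖ ≤ ‖y - x‖ + ‖P (f y) - (y - x)‖ := norm_le_insert' _ _
    _ ≤ ‖y - x‖ + ω / 2 * ‖y - x‖ ^ 2 := by linarith

theorem ContinuousLinearMap.isUnit_adjoint_comp_self {𝕜 E F : Type*} [RCLike 𝕜]
    [NormedAddCommGroup E] [InnerProductSpace 𝕜 E] [CompleteSpace E] [FiniteDimensional 𝕜 E]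
    [NormedAddCommGroup F] [InnerProductSpace 𝕜 F] [CompleteSpace F]
    {A : E →L[𝕜] F} (hA : Function.Injective A) : IsUnit (adjoint A ∘L A) := by
  have hinj : Function.Injective (adjoint A ∘L A) := (adjoint_comp_self_injective_iff A).2 hA
  exact isUnit_iff_bijective.2 ⟨hinj, LinearMap.injective_iff_surjective.1 hinj⟩

theorem pinv_comp_self {n m : ℕ} {A : EuclideanSpace ℂ (Fin n) →L[ℂ] EuclideanSpace ℂ (Fin m)}
    (hA : Function.Injective A) : pinv A ∘L A = .id ℂ _ := by
  rw [pinv, comp_assoc, ← ringInverse_eq_inverse]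
  exact Ring.inverse_mul_cancel _ (isUnit_adjoint_comp_self hA)

theorem first_newton_correction_bound_general {n m : ℕ}
    (F : EuclideanSpace ℂ (Fin n) → EuclideanSpace ℂ (Fin m)) (hF : ContDiff ℂ 1 F)
    (D : Set (EuclideanSpace ℂ (Fin n))) (hDconv : Convex ℝ D)
    (ω : ℝ) (hω : 0 ≤ ω)
    (hinj : ∀ x ∈ D, Function.Injective (fderiv ℂ F x))
    (hLip : ∀ x ∈ D, ∀ y ∈ D, ∀ t ∈ Set.Icc (0:ℝ) 1,
      ‖(pinv (fderiv ℂ F y)) ∘L (fderiv ℂ F (x + t • (y - x)) - fderiv ℂ F x)‖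
        ≤ ω * t * ‖y - x‖)
    (x xhat : EuclideanSpace ℂ (Fin n)) (hx : x ∈ D) (hxhat : xhat ∈ D)
    (hFx : F x = 0) (η Δt : ℝ) (p : ℕ)
    (hclose : ‖xhat - x‖ ≤ η * Δt ^ p) :
    ‖pinv (fderiv ℂ F xhat) (F xhat)‖
      ≤ η * Δt ^ p * (1 + ω / 2 * (η * Δt ^ p)) := by
  have hJ (z) : HasFDerivAt F (fderiv ℂ F z) z :=
    (hF.differentiable one_ne_zero z).hasFDerivAt
  have hP : pinv (fderiv ℂ F xhat) ∘L fderiv ℂ F xhat = .id ℂ _ :=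
    pinv_comp_self (hinj xhat hxhat)
  have hLip' : ∀ z ∈ segment ℝ x xhat,
      ‖pinv (fderiv ℂ F xhat) ∘L (fderiv ℂ F xhat - fderiv ℂ F z)‖ ≤ ω * ‖xhat - z‖ := by
    intro z hz
    have h := hLip z (hDconv.segment_subset hx hxhat hz) xhat hxhat 1 (right_mem_Icc.2 zero_le_one)
    rwa [one_smul, add_sub_cancel, mul_one] at h
  have key := norm_newton_correction_le (ω := ω) (f' := fun z => (fderiv ℂ F z).restrictScalars ℝ)
    (P := (pinv (fderiv ℂ F xhat)).restrictScalars ℝ) (fun z _ => (hJ z).restrictScalars ℝ) hFx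
    (by ext1 v; exact congr($hP v)) fun z hz =>
      (norm_restrictScalars (pinv (fderiv ℂ F xhat) ∘L (fderiv ℂ F xhat - fderiv ℂ F z))).trans_le
        (hLip' z hz)
  have hd := norm_nonneg (xhat - x)
  calc _ ≤ ‖xhat - x‖ + ω / 2 * ‖xhat - x‖ ^ 2 := key
    _ ≤ η * Δt ^ p + ω / 2 * (η * Δt ^ p) ^ 2 := by gcongr
    _ = η * Δt ^ p * (1 + ω / 2 * (η * Δt ^ p)) := by ring

/-- Bound on the first Newton correction at a predicted point `x̂` near a zero `x`. -/
theorem first_newton_correction_bound {n m : ℕ} (hn : 0 < n) (hnm : n ≤ m)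
    (F : EuclideanSpace ℂ (Fin n) → EuclideanSpace ℂ (Fin m)) (hF : ContDiff ℂ 1 F)
    (D : Set (EuclideanSpace ℂ (Fin n))) (hDopen : IsOpen D) (hDconv : Convex ℝ D)
    (ω : ℝ) (hω : 0 ≤ ω)
    (hinj : ∀ x ∈ D, Function.Injective (fderiv ℂ F x))
    (hLip : ∀ x ∈ D, ∀ y ∈ D, ∀ t ∈ Set.Icc (0:ℝ) 1,
      ‖(pinv (fderiv ℂ F y)) ∘L (fderiv ℂ F (x + t • (y - x)) - fderiv ℂ F x)‖
        ≤ ω * t * ‖y - x‖)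
    (x xhat : EuclideanSpace ℂ (Fin n)) (hx : x ∈ D) (hxhat : xhat ∈ D)
    (hFx : F x = 0) (η Δt : ℝ) (hη : 0 ≤ η) (hΔt : 0 ≤ Δt) (p : ℕ) (hp : 1 ≤ p)
    (hclose : ‖xhat - x‖ ≤ η * Δt ^ p) :
    ‖pinv (fderiv ℂ F xhat) (F xhat)‖
      ≤ η * Δt ^ p * (1 + ω / 2 * (η * Δt ^ p)) :=
  first_newton_correction_bound_general F hF D hDconv ω hω hinj hLip x xhat hx hxhat hFx η Δt p
    hclose
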